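/- Let A ∈ 𝒫_π be a canonical plane matrix of type π with parameters λ_{j,i}. Then A is similar, via a permutation matrix, to the block diagonal matrix ⊕_{j=1}^{t} (m_j − m_{j+1}) G_j, the direct sum containing exactly (m_j − m_{j+1}) copies of G_j for each j = 1,...,t. -/
import Mathlib


/- Common setup: canonical plane matrices (P. Daugulis, "A parametrization of
matrix conjugacy orbit sets as unions of affine planes"). -/

open Matrix Polynomial

noncomputable section

/-- `ℕ`-indexed entries of the generalized companion matrix `R_l(y₁,...,y_l)`:
subdiagonal entries `1`, last column given (via Vieta) by the coefficients of
`∏ (X - yᵢ)` (entry in row `k` of the last column is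
`(−1)^{l+1−k}·e_{l+1−k}(y)`), all other entries `0`. -/
def genCompE (l : ℕ) (y : Fin l → ℂ) (i j : ℕ) : ℂ :=
  if i < l ∧ j < l then
    (if i = j + 1 then 1
     else if j = l - 1 then -((∏ k, (X - C (y k))).coeff i)
     else 0)
  else 0

/-- The generalized companion matrix `R_l(y₁,...,y_l)`, i.e. the companion
matrix of `∏ (X - yᵢ)`. -/
def genComp (l : ℕ) (y : Fin l → ℂ) : Matrix (Fin l) (Fin l) ℂ :=
  Matrix.of fun i j => genCompE l y i j

/-- A partition of `n`, recorded by its stacks: `t` stacks, with strictly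
decreasing positive distinct values `m 0 > m 1 > ... > m (t-1)` and positive
lengths `l j`, so that the partition consists of `l j` copies of `m j` and
`n = ∑ j, l j * m j`. -/
structure StackPartition (n : ℕ) where
  t : ℕ
  m : Fin t → ℕ
  l : Fin t → ℕ
  m_pos : ∀ j, 0 < m j
  l_pos : ∀ j, 0 < l j
  m_strictAnti : ∀ i j : Fin t, i < j → m j < m i
  sum_eq : (∑ j, l j * m j) = n

namespace StackPartition

variable {n : ℕ} (P : StackPartition n)

/-- `m j` extended by `0` beyond the number of stacks (`0`-indexed), so
`mE 0 = m_1` and `mE t = m_{t+1} = 0` in the paper's notation. -/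
def mE (j : ℕ) : ℕ := if h : j < P.t then P.m ⟨j, h⟩ else 0

/-- Row/column offset of the `j`-th diagonal block (`0`-indexed):
`S j = ∑_{i<j} l i * m i`. -/
def S (j : ℕ) : ℕ := ∑ i : Fin P.t, if (i : ℕ) < j then P.l i * P.m i else 0

/-- `sE j = ∑_{i<j} l i`; the paper's `s_j` (for `1`-indexed `j`) is `sE j`. -/
def sE (j : ℕ) : ℕ := ∑ i : Fin P.t, if (i : ℕ) < j then P.l i else 0

/-- The multiset of addends of the partition. -/
def parts : Multiset ℕ := ∑ j : Fin P.t, Multiset.replicate (P.l j) (P.m j)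

/-- Offsets for the direct sum `⊕_j (m_j - m_{j+1}) G_j`. -/
def T (k : ℕ) : ℕ :=
  ∑ i : Fin P.t, if (i : ℕ) < k then (P.m i - P.mE ((i : ℕ) + 1)) * P.sE ((i : ℕ) + 1) else 0

end StackPartition

/-- Parameters `λ_{j,1},...,λ_{j,l_j}` for each stack `j`. -/
def Params {n : ℕ} (P : StackPartition n) := (j : Fin P.t) → Fin (P.l j) → ℂ

/-- `ℕ`-indexed entry of the canonical plane matrix of type `P` with
parameters `lam`: the `j`-th diagonal block (of size `l j * m j`, occupying
rows and columns `[S j, S (j+1))`) is `R_{l j}(lam j) ⊗ E_{m j}` (row index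
`a` of the block encodes the pair `(a / m j, a % m j)`), the block directly
below it occupies the first `m (j+1)` rows of block `j+1` and the last `m j`
columns of block `j` and equals `[O | E_{m (j+1)}]`, and all other entries
vanish. -/
def cpmEntry {n : ℕ} (P : StackPartition n) (lam : Params P) (r c : ℕ) : ℂ :=
  (∑ j : Fin P.t,
    if P.S j ≤ r ∧ r < P.S ((j : ℕ) + 1) ∧ P.S j ≤ c ∧ c < P.S ((j : ℕ) + 1)
        ∧ (r - P.S j) % P.m j = (c - P.S j) % P.m j then
      genCompE (P.l j) (lam j) ((r - P.S j) / P.m j) ((c - P.S j) / P.m j)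
    else 0)
  +
  (∑ j : Fin P.t,
    if P.S ((j : ℕ) + 1) ≤ r ∧ r < P.S ((j : ℕ) + 1) + P.mE ((j : ℕ) + 1)
        ∧ P.S ((j : ℕ) + 1) - P.m j ≤ c ∧ c < P.S ((j : ℕ) + 1)
        ∧ c - (P.S ((j : ℕ) + 1) - P.m j)
            = (P.m j - P.mE ((j : ℕ) + 1)) + (r - P.S ((j : ℕ) + 1)) then
      (1 : ℂ)
    else 0)

/-- The canonical plane matrix of type `P` with parameters `lam`. -/
def cpm {n : ℕ} (P : StackPartition n) (lam : Params P) : Matrix (Fin n) (Fin n) ℂ :=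
  Matrix.of fun r c => cpmEntry P lam r c

/-- The set `𝒫_π` of canonical plane matrices of type `P`. -/
def planeSet {n : ℕ} (P : StackPartition n) : Set (Matrix (Fin n) (Fin n) ℂ) :=
  { A | ∃ lam : Params P, A = cpm P lam }

/-- Similarity (conjugacy) of square complex matrices. -/
def MatrixSimilar {n : ℕ} (A B : Matrix (Fin n) (Fin n) ℂ) : Prop :=
  ∃ Q : Matrix (Fin n) (Fin n) ℂ, IsUnit Q.det ∧ A * Q = Q * B

/-- The `A`-cyclic subspace `ℂ[A]·v`, spanned by `v, Av, A²v, ...`. -/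
def cyclicSpan {n : ℕ} (A : Matrix (Fin n) (Fin n) ℂ) (v : Fin n → ℂ) :
    Submodule ℂ (Fin n → ℂ) :=
  Submodule.span ℂ (Set.range fun k : ℕ => (A ^ k) *ᵥ v)

/-- `ℕ`-indexed entry of the matrix
`G_j = ⊕_{i≤j} C(a_{i,0},...,a_{i,l_i−1}) + Σ_{i<j} E_{s_i+1,s_i}`
(`0`-indexed `j`; the `i`-th diagonal block is the companion matrix of
`∏_k (X - λ_{i,k})`, and the matrix units sit just below the lower-left
corners of the diagonal blocks). -/
def GEntry {n : ℕ} (P : StackPartition n) (lam : Params P) (j r c : ℕ) : ℂ :=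
  (∑ i : Fin P.t,
    if (i : ℕ) ≤ j ∧ P.sE i ≤ r ∧ r < P.sE ((i : ℕ) + 1)
        ∧ P.sE i ≤ c ∧ c < P.sE ((i : ℕ) + 1) then
      genCompE (P.l i) (lam i) (r - P.sE i) (c - P.sE i)
    else 0)
  +
  (∑ i : Fin P.t,
    if 1 ≤ (i : ℕ) ∧ (i : ℕ) ≤ j ∧ r = P.sE i ∧ c + 1 = P.sE i then (1 : ℂ) else 0)

/-- The `s_j × s_j` matrix `G_j` (`0`-indexed `j`, of size `sE (j+1)`). -/
def Gm {n : ℕ} (P : StackPartition n) (lam : Params P) (j : Fin P.t) :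
    Matrix (Fin (P.sE ((j : ℕ) + 1))) (Fin (P.sE ((j : ℕ) + 1))) ℂ :=
  Matrix.of fun r c => GEntry P lam j r c

/-- The multiset `[λ_{j,1},...,λ_{j,l_j}]` of stack `j`. -/
def stackMultiset {n : ℕ} (P : StackPartition n) (lam : Params P) (j : Fin P.t) :
    Multiset ℂ :=
  Multiset.map (lam j) Finset.univ.val

/-- `μ(z, j)`: multiplicity of `z` in the multiset `[λ_{j,1},...,λ_{j,l_j}]`. -/
def mu {n : ℕ} (P : StackPartition n) (lam : Params P) (z : ℂ) (j : Fin P.t) : ℕ :=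
  (stackMultiset P lam j).count z

/-- The multiset of all parameters of stacks `0,...,j` (`0`-indexed), so
`α(z, j) = (lamUpTo P lam j).count z`. -/
def lamUpTo {n : ℕ} (P : StackPartition n) (lam : Params P) (j : ℕ) : Multiset ℂ :=
  ∑ i : Fin P.t, if (i : ℕ) ≤ j then stackMultiset P lam i else 0

/-- Index type for the direct sum of one Jordan block per distinct element of a
multiset `s`, the block for `z` having size `s.count z`. -/
abbrev JordanIdx (s : Multiset ℂ) : Type := Σ z : s.toFinset, Fin (s.count z.val)

/-- The direct sum `⊕_z J_{s.count z}(z)` over the distinct elements `z` of the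
multiset `s` (lower Jordan blocks: eigenvalue on the diagonal, ones on the
subdiagonal). -/
def jordanOfMultiset (s : Multiset ℂ) : Matrix (JordanIdx s) (JordanIdx s) ℂ :=
  Matrix.of fun x y =>
    if x.1 = y.1 then
      (if (x.2 : ℕ) = (y.2 : ℕ) then x.1.val
       else if (x.2 : ℕ) = (y.2 : ℕ) + 1 then 1 else 0)
    else 0

/-- `0`-indexed Weyr characteristic: `weyr B z i = ω_{i+1}` where
`ω_k = dim ker (B - zI)^k − dim ker (B - zI)^{k-1}`. -/
def weyr {n : ℕ} (B : Matrix (Fin n) (Fin n) ℂ) (z : ℂ) (i : ℕ) : ℕ :=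
  Module.finrank ℂ (LinearMap.ker ((B - z • 1).mulVecLin ^ (i + 1)))
    - Module.finrank ℂ (LinearMap.ker ((B - z • 1).mulVecLin ^ i))

/-- `ℕ`-indexed entry of the block diagonal matrix `⊕_j (m_j - m_{j+1}) G_j`
(for each `j`, exactly `m j - m (j+1)` consecutive copies of `G_j`). -/
def dsEntry {n : ℕ} (P : StackPartition n) (lam : Params P) (r c : ℕ) : ℂ :=
  ∑ j : Fin P.t,
    if P.T j ≤ r ∧ r < P.T ((j : ℕ) + 1) ∧ P.T j ≤ c ∧ c < P.T ((j : ℕ) + 1)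
        ∧ (r - P.T j) / P.sE ((j : ℕ) + 1) = (c - P.T j) / P.sE ((j : ℕ) + 1) then
      GEntry P lam j ((r - P.T j) % P.sE ((j : ℕ) + 1)) ((c - P.T j) % P.sE ((j : ℕ) + 1))
    else 0

/-- Index type for `⊕_{j=1}^{t} (m_j - m_{j+1}) (⊕_z J_{α(z,j)}(z))`. -/
abbrev FullJordanIdx {n : ℕ} (P : StackPartition n) (lam : Params P) : Type :=
  Σ j : Fin P.t, Fin (P.m j - P.mE ((j : ℕ) + 1)) × JordanIdx (lamUpTo P lam (j : ℕ))

/-- The matrix `⊕_{j=1}^{t} (m_j - m_{j+1}) (⊕_z J_{α(z,j)}(z))`: for each `j`,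
`m j - m (j+1)` copies of the direct sum, over the distinct `z` with
`α(z,j) = μ(z,1) + ... + μ(z,j) > 0`, of the Jordan blocks `J_{α(z,j)}(z)`. -/
def fullJordan {n : ℕ} (P : StackPartition n) (lam : Params P) :
    Matrix (FullJordanIdx P lam) (FullJordanIdx P lam) ℂ :=
  Matrix.of fun x y =>
    if h : x.1 = y.1 then
      (fun y2 : Fin (P.m x.1 - P.mE ((x.1 : ℕ) + 1)) × JordanIdx (lamUpTo P lam (x.1 : ℕ)) =>
        if x.2.1 = y2.1 then jordanOfMultiset (lamUpTo P lam (x.1 : ℕ)) x.2.2 y2.2 else 0)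
      (cast (congrArg (fun j : Fin P.t =>
        Fin (P.m j - P.mE ((j : ℕ) + 1)) × JordanIdx (lamUpTo P lam (j : ℕ))) h.symm) y.2)
    else 0

end

noncomputable section Aux
open Finset

namespace StackPartition

variable {n : ℕ} (P : StackPartition n)

/-- `l j` extended by `0` beyond the number of stacks. -/
def lE (j : ℕ) : ℕ := if h : j < P.t then P.l ⟨j, h⟩ else 0

lemma lE_fin (b : Fin P.t) : P.lE (b : ℕ) = P.l b := by
  simp [lE, b.isLt]

lemma mE_fin (b : Fin P.t) : P.mE (b : ℕ) = P.m b := by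
  simp [mE, b.isLt]

lemma lE_pos {j : ℕ} (h : j < P.t) : 0 < P.lE j := by
  simp only [lE, dif_pos h]; exact P.l_pos _

lemma mE_pos {j : ℕ} (h : j < P.t) : 0 < P.mE j := by
  simp only [mE, dif_pos h]; exact P.m_pos _

lemma mE_eq_zero {j : ℕ} (h : P.t ≤ j) : P.mE j = 0 := dif_neg (by omega)

lemma lE_eq_zero {j : ℕ} (h : P.t ≤ j) : P.lE j = 0 := dif_neg (by omega)

lemma mE_anti : Antitone P.mE := by
  intro a b hab
  by_cases hb : b < P.t
  · have ha : a < P.t := lt_of_le_of_lt hab hb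
    simp only [mE, dif_pos ha, dif_pos hb]
    rcases eq_or_lt_of_le hab with h | h
    · subst h; exact le_rfl
    · exact le_of_lt (P.m_strictAnti ⟨a, ha⟩ ⟨b, hb⟩ h)
  · rw [P.mE_eq_zero (le_of_not_gt hb)]; exact Nat.zero_le _

lemma mE_succ_lt {j : ℕ} (h : j < P.t) : P.mE (j + 1) < P.mE j := by
  by_cases h1 : j + 1 < P.t
  · simp only [mE, dif_pos h, dif_pos h1]
    exact P.m_strictAnti ⟨j, h⟩ ⟨j+1, h1⟩ (by simp)
  · rw [P.mE_eq_zero (by omega)]; exact P.mE_pos h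

lemma t_pos (hn : 0 < n) : 0 < P.t := by
  by_contra h
  push_neg at h
  have h0 : P.t = 0 := by omega
  have he : (∑ j : Fin P.t, P.l j * P.m j) = 0 := by
    haveI : IsEmpty (Fin P.t) := ⟨fun x => absurd x.isLt (by omega)⟩
    rw [Finset.univ_eq_empty, Finset.sum_empty]
  have h2 := P.sum_eq
  rw [he] at h2
  omega

lemma sum_fin_ite {M : Type*} [AddCommMonoid M] (t j : ℕ) (f : ℕ → M)
    (hf : ∀ i, t ≤ i → f i = 0) :
    (∑ i : Fin t, if (i : ℕ) < j then f i else 0) = ∑ i ∈ Finset.range j, f i := by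
  rw [Fin.sum_univ_eq_sum_range (fun i => if i < j then f i else 0) t]
  rw [← Finset.sum_filter]
  rw [show (Finset.range t).filter (fun i => i < j)
      = (Finset.range j).filter (fun i => i < t) by ext x; simp; omega]
  rw [Finset.sum_filter]
  apply Finset.sum_congr rfl
  intro x _
  by_cases h : x < t
  · simp [h]
  · simp [h, hf x (le_of_not_gt h)]

lemma S_eq (j : ℕ) : P.S j = ∑ i ∈ Finset.range j, P.lE i * P.mE i := by
  rw [S, ← sum_fin_ite P.t j (fun i => P.lE i * P.mE i)
      (fun i hi => by simp [P.lE_eq_zero hi])]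
  apply Finset.sum_congr rfl
  intro x _
  rw [lE_fin, mE_fin]

lemma sE_eq (j : ℕ) : P.sE j = ∑ i ∈ Finset.range j, P.lE i := by
  rw [sE, ← sum_fin_ite P.t j (fun i => P.lE i) (fun i hi => P.lE_eq_zero hi)]
  apply Finset.sum_congr rfl
  intro x _
  rw [lE_fin]

lemma T_eq (j : ℕ) : P.T j = ∑ i ∈ Finset.range j, (P.mE i - P.mE (i+1)) * P.sE (i+1) := by
  rw [T, ← sum_fin_ite P.t j (fun i => (P.mE i - P.mE (i+1)) * P.sE (i+1))
      (fun i hi => by simp [P.mE_eq_zero hi, P.mE_eq_zero (show P.t ≤ i + 1 by omega)])]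
  apply Finset.sum_congr rfl
  intro x _
  rw [mE_fin]

lemma S_succ (j : ℕ) : P.S (j+1) = P.S j + P.lE j * P.mE j := by
  rw [S_eq, S_eq, Finset.sum_range_succ]

lemma sE_succ (j : ℕ) : P.sE (j+1) = P.sE j + P.lE j := by
  rw [sE_eq, sE_eq, Finset.sum_range_succ]

lemma T_succ (j : ℕ) : P.T (j+1) = P.T j + (P.mE j - P.mE (j+1)) * P.sE (j+1) := by
  rw [T_eq, T_eq, Finset.sum_range_succ]

lemma S_zero : P.S 0 = 0 := by rw [S_eq, Finset.sum_range_zero]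
lemma sE_zero : P.sE 0 = 0 := by rw [sE_eq, Finset.sum_range_zero]
lemma T_zero : P.T 0 = 0 := by rw [T_eq, Finset.sum_range_zero]

lemma S_mono : Monotone P.S :=
  monotone_nat_of_le_succ (fun j => by rw [S_succ]; omega)
lemma sE_mono : Monotone P.sE :=
  monotone_nat_of_le_succ (fun j => by rw [sE_succ]; omega)
lemma T_mono : Monotone P.T :=
  monotone_nat_of_le_succ (fun j => by rw [T_succ]; omega)

lemma S_t : P.S P.t = n := by
  have h : (∑ j : Fin P.t, P.l j * P.m j) = ∑ i ∈ Finset.range P.t, P.lE i * P.mE i := by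
    rw [show (∑ j : Fin P.t, P.l j * P.m j) = ∑ j : Fin P.t, P.lE (j:ℕ) * P.mE (j:ℕ) from
      Finset.sum_congr rfl (fun x _ => by rw [lE_fin, mE_fin])]
    exact Fin.sum_univ_eq_sum_range (fun i => P.lE i * P.mE i) P.t
  rw [S_eq, ← h, P.sum_eq]

lemma sE_lt_of_lt {a b : ℕ} (hab : a < b) (ha : a < P.t) : P.sE a < P.sE b := by
  have h1 : P.sE (a+1) ≤ P.sE b := P.sE_mono (by omega)
  have h2 := P.sE_succ a
  have := P.lE_pos ha
  omega

lemma T_t : P.T P.t = (n : ℕ) := by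
  have key : ∀ j, P.mE (j+1) ≤ P.mE j := fun j => P.mE_anti (by omega)
  have h1 : (P.T P.t : ℤ) = ∑ j ∈ Finset.range P.t,
      ((P.mE j : ℤ) - P.mE (j+1)) * P.sE (j+1) := by
    rw [T_eq]
    push_cast
    apply Finset.sum_congr rfl
    intro j _
    rw [Nat.cast_sub (key j)]
  have h2 : (P.S P.t : ℤ) = ∑ j ∈ Finset.range P.t, ((P.sE (j+1) : ℤ) - P.sE j) * P.mE j := by
    rw [S_eq]
    push_cast
    apply Finset.sum_congr rfl
    intro j _
    rw [P.sE_succ j]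
    push_cast
    ring
  have h3 : ∑ j ∈ Finset.range P.t,
      ((((P.sE j : ℤ)) * P.mE j) - ((P.sE (j+1) : ℤ) * P.mE (j+1)))
      = (P.sE 0 : ℤ) * P.mE 0 - (P.sE P.t : ℤ) * P.mE P.t :=
    Finset.sum_range_sub' (fun j => (P.sE j : ℤ) * P.mE j) P.t
  have h4 : ∑ j ∈ Finset.range P.t,
      ((((P.sE j : ℤ)) * P.mE j) - ((P.sE (j+1) : ℤ) * P.mE (j+1)))
      = ∑ j ∈ Finset.range P.t,
        (((P.mE j : ℤ) - P.mE (j+1)) * P.sE (j+1) - ((P.sE (j+1) : ℤ) - P.sE j) * P.mE j) := by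
    apply Finset.sum_congr rfl
    intro j _
    ring
  rw [P.sE_zero] at h3
  have h5 : P.mE P.t = 0 := P.mE_eq_zero le_rfl
  rw [h5] at h3
  have h6 : (∑ j ∈ Finset.range P.t, ((P.mE j : ℤ) - P.mE (j+1)) * P.sE (j+1))
      - (∑ j ∈ Finset.range P.t, ((P.sE (j+1) : ℤ) - P.sE j) * P.mE j) = 0 := by
    rw [← Finset.sum_sub_distrib, ← h4, h3]
    push_cast
    ring
  have h7 : (P.T P.t : ℤ) = (P.S P.t : ℤ) := by rw [h1, h2]; linarith
  have h8 : P.T P.t = P.S P.t := by exact_mod_cast h7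
  rw [h8, P.S_t]

end StackPartition
end Aux
noncomputable section Aux2
namespace StackPartition

/-- Number of `j < t` with `g (j+1) ≤ v`; for monotone `g` this locates `v`
in the intervals `[g j, g (j+1))`. -/
def cnt (t : ℕ) (g : ℕ → ℕ) (v : ℕ) : ℕ :=
  ((Finset.range t).filter (fun j => g (j+1) ≤ v)).card

lemma cnt_eq (t : ℕ) (g : ℕ → ℕ) (hg : Monotone g) {v a : ℕ} (hat : a ≤ t)
    (h1 : g a ≤ v) (h2 : v < g (a+1)) : cnt t g v = a := by
  unfold cnt
  rw [show (Finset.range t).filter (fun j => g (j+1) ≤ v) = Finset.range a from ?_]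
  · exact Finset.card_range a
  ext x
  simp only [Finset.mem_filter, Finset.mem_range]
  constructor
  · rintro ⟨hxt, hx⟩
    by_contra h
    push_neg at h
    have : g (a+1) ≤ g (x+1) := hg (by omega)
    omega
  · intro hxa
    exact ⟨by omega, le_trans (hg (by omega : x + 1 ≤ a)) h1⟩

lemma cnt_spec (t : ℕ) (g : ℕ → ℕ) (hg : Monotone g) (h0 : g 0 = 0) {v : ℕ}
    (hv : v < g t) :
    cnt t g v < t ∧ g (cnt t g v) ≤ v ∧ v < g (cnt t g v + 1) := by
  set s := (Finset.range t).filter (fun j => g (j+1) ≤ v) with hs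
  have hcard : cnt t g v = s.card := rfl
  have hct : s.card ≤ t := le_trans (Finset.card_filter_le _ _) (by rw [Finset.card_range])
  have ht : 0 < t := by
    by_contra h
    push_neg at h
    have : g t ≤ g 0 := hg (by omega)
    omega
  have hlt : s.card < t := by
    rcases eq_or_lt_of_le hct with h | h
    · exfalso
      have hsub : s = Finset.range t :=
        Finset.eq_of_subset_of_card_le (Finset.filter_subset _ _)
          (by rw [Finset.card_range, h])
      have hmem : t - 1 ∈ s := by rw [hsub]; exact Finset.mem_range.2 (by omega)
      rw [hs, Finset.mem_filter] at hmem
      have : g (t - 1 + 1) ≤ v := hmem.2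
      rw [show t - 1 + 1 = t by omega] at this
      omega
    · exact h
  have h2 : v < g (s.card + 1) := by
    by_contra h
    push_neg at h
    have hsub : Finset.range (s.card + 1) ⊆ s := by
      intro x hx
      rw [Finset.mem_range] at hx
      rw [hs, Finset.mem_filter, Finset.mem_range]
      exact ⟨by omega, le_trans (hg (by omega : x + 1 ≤ s.card + 1)) h⟩
    have := Finset.card_le_card hsub
    rw [Finset.card_range] at this
    omega
  have h1 : g s.card ≤ v := by
    rcases Nat.eq_zero_or_pos s.card with h | h
    · rw [h, h0]; exact Nat.zero_le _
    · have hex : ∃ x ∈ s, s.card - 1 ≤ x := by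
        by_contra hno
        push_neg at hno
        have hsub : s ⊆ Finset.range (s.card - 1) := by
          intro x hx
          exact Finset.mem_range.2 (hno x hx)
        have := Finset.card_le_card hsub
        rw [Finset.card_range] at this
        omega
      obtain ⟨x, hxs, hx⟩ := hex
      rw [hs, Finset.mem_filter] at hxs
      exact le_trans (hg (by omega : s.card ≤ x + 1)) hxs.2
  rw [hcard]
  exact ⟨hlt, h1, h2⟩

lemma interval_eq {g : ℕ → ℕ} (hg : Monotone g) {a b v : ℕ}
    (ha1 : g a ≤ v) (ha2 : v < g (a+1)) (hb1 : g b ≤ v) (hb2 : v < g (b+1)) : a = b := by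
  rcases lt_trichotomy a b with h | h | h
  · have : g (a+1) ≤ g b := hg (by omega)
    omega
  · exact h
  · have : g (b+1) ≤ g a := hg (by omega)
    omega

lemma divmod_eq {s q p : ℕ} (hp : p < s) :
    (q * s + p) / s = q ∧ (q * s + p) % s = p := by
  have hs : 0 < s := by omega
  constructor
  · rw [Nat.mul_comm, Nat.mul_add_div hs, Nat.div_eq_of_lt hp]
    omega
  · rw [Nat.mul_comm, Nat.mul_add_mod, Nat.mod_eq_of_lt hp]

lemma mulmod_unique {m k c k' c' : ℕ} (hc : c < m) (hc' : c' < m)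
    (h : k * m + c = k' * m + c') : k = k' ∧ c = c' := by
  rcases lt_trichotomy k k' with hlt | heq | hgt
  · have h1 : (k + 1) * m ≤ k' * m := Nat.mul_le_mul_right _ (by omega)
    rw [add_one_mul] at h1
    omega
  · constructor
    · exact heq
    · subst heq; omega
  · have h1 : (k' + 1) * m ≤ k * m := Nat.mul_le_mul_right _ (by omega)
    rw [add_one_mul] at h1
    omega

variable {n : ℕ} (P : StackPartition n)

def dsJ (r : ℕ) : ℕ := cnt P.t P.T r
def dsQ (r : ℕ) : ℕ := (r - P.T (P.dsJ r)) / P.sE (P.dsJ r + 1)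
def dsP (r : ℕ) : ℕ := (r - P.T (P.dsJ r)) % P.sE (P.dsJ r + 1)
def dsI (r : ℕ) : ℕ := cnt P.t P.sE (P.dsP r)
def dsK (r : ℕ) : ℕ := P.dsP r - P.sE (P.dsI r)

/-- The permutation, on `ℕ`-indices: from direct-sum coordinates to
canonical-plane-matrix coordinates. -/
def fwd (r : ℕ) : ℕ :=
  P.S (P.dsI r) + P.dsK r * P.mE (P.dsI r)
    + (P.mE (P.dsI r) - P.mE (P.dsJ r) + P.dsQ r)

lemma ds_decomp {r : ℕ} (hr : r < n) :
    ∃ j i q k : ℕ, j < P.t ∧ i ≤ j ∧ i < P.t ∧ q < P.mE j - P.mE (j+1) ∧ k < P.lE i ∧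
      r = P.T j + q * P.sE (j+1) + (P.sE i + k) := by
  have hT : r < P.T P.t := by rw [P.T_t]; exact hr
  obtain ⟨hj, hj1, hj2⟩ := cnt_spec P.t P.T P.T_mono P.T_zero hT
  set j := cnt P.t P.T r with hjdef
  have hs : 0 < P.sE (j+1) := by
    have h1 := P.sE_succ j
    have h2 := P.lE_pos hj
    omega
  have hTs := P.T_succ j
  set d := r - P.T j with hd
  have hdlt : d < (P.mE j - P.mE (j+1)) * P.sE (j+1) := by omega
  set q := d / P.sE (j+1) with hq
  set p := d % P.sE (j+1) with hp
  have hdqp : d = q * P.sE (j+1) + p := by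
    rw [hq, hp, Nat.mul_comm]
    exact (Nat.div_add_mod d (P.sE (j+1))).symm
  have hplt : p < P.sE (j+1) := Nat.mod_lt _ hs
  have hqlt : q < P.mE j - P.mE (j+1) := by
    by_contra hcon
    push_neg at hcon
    have : (P.mE j - P.mE (j+1)) * P.sE (j+1) ≤ q * P.sE (j+1) :=
      Nat.mul_le_mul_right _ hcon
    omega
  have hpt : p < P.sE P.t := lt_of_lt_of_le hplt (P.sE_mono (by omega))
  obtain ⟨hi, hi1, hi2⟩ := cnt_spec P.t P.sE P.sE_mono P.sE_zero hpt
  set i := cnt P.t P.sE p with hidef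
  have hij : i ≤ j := by
    by_contra hcon
    push_neg at hcon
    have : P.sE (j+1) ≤ P.sE i := P.sE_mono (by omega)
    omega
  refine ⟨j, i, q, p - P.sE i, hj, hij, hi, hqlt, ?_, ?_⟩
  · have := P.sE_succ i
    omega
  · omega

lemma ds_unique {r j i q k : ℕ} (hj : j < P.t) (hij : i ≤ j)
    (hq : q < P.mE j - P.mE (j+1)) (hk : k < P.lE i)
    (hr : r = P.T j + q * P.sE (j+1) + (P.sE i + k)) :
    P.dsJ r = j ∧ P.dsQ r = q ∧ P.dsP r = P.sE i + k ∧ P.dsI r = i ∧ P.dsK r = k := by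
  have hi : i < P.t := lt_of_le_of_lt hij hj
  have hplt : P.sE i + k < P.sE (i+1) := by
    have := P.sE_succ i
    omega
  have hps : P.sE i + k < P.sE (j+1) := lt_of_lt_of_le hplt (P.sE_mono (by omega))
  have hTr1 : P.T j ≤ r := by omega
  have hTr2 : r < P.T (j+1) := by
    have hTs := P.T_succ j
    have : (q + 1) * P.sE (j+1) ≤ (P.mE j - P.mE (j+1)) * P.sE (j+1) :=
      Nat.mul_le_mul_right _ (by omega)
    rw [add_one_mul] at this
    omega
  have hJ : P.dsJ r = j := cnt_eq P.t P.T P.T_mono (by omega) hTr1 hTr2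
  have hrd : r - P.T j = q * P.sE (j+1) + (P.sE i + k) := by omega
  have hQ : P.dsQ r = q := by
    rw [dsQ, hJ, hrd]
    exact (divmod_eq hps).1
  have hP : P.dsP r = P.sE i + k := by
    rw [dsP, hJ, hrd]
    exact (divmod_eq hps).2
  have hI : P.dsI r = i := by
    rw [dsI, hP]
    exact cnt_eq P.t P.sE P.sE_mono (by omega) (by omega) hplt
  have hK : P.dsK r = k := by
    rw [dsK, hP, hI]
    omega
  exact ⟨hJ, hQ, hP, hI, hK⟩

lemma fwd_eq {r j i q k : ℕ} (hj : j < P.t) (hij : i ≤ j)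
    (hq : q < P.mE j - P.mE (j+1)) (hk : k < P.lE i)
    (hr : r = P.T j + q * P.sE (j+1) + (P.sE i + k)) :
    P.fwd r = P.S i + k * P.mE i + (P.mE i - P.mE j + q) := by
  obtain ⟨hJ, hQ, _, hI, hK⟩ := P.ds_unique hj hij hq hk hr
  rw [fwd, hJ, hQ, hI, hK]

lemma copy_lt {i j q : ℕ} (hj : j < P.t) (hij : i ≤ j)
    (hq : q < P.mE j - P.mE (j+1)) : P.mE i - P.mE j + q < P.mE i := by
  have h1 : P.mE j ≤ P.mE i := P.mE_anti hij
  have h2 : P.mE (j+1) ≤ P.mE j := P.mE_anti (by omega)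
  omega

lemma block_mem {i k c : ℕ} (hi : i < P.t) (hk : k < P.lE i) (hc : c < P.mE i) :
    P.S i ≤ P.S i + k * P.mE i + c ∧ P.S i + k * P.mE i + c < P.S (i+1) := by
  refine ⟨by omega, ?_⟩
  have h1 : (k + 1) * P.mE i ≤ P.lE i * P.mE i := Nat.mul_le_mul_right _ (by omega)
  rw [add_one_mul] at h1
  have h2 := P.S_succ i
  omega

lemma fwd_lt {r : ℕ} (hr : r < n) : P.fwd r < n := by
  obtain ⟨j, i, q, k, hj, hij, hi, hq, hk, hrd⟩ := P.ds_decomp hr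
  rw [P.fwd_eq hj hij hq hk hrd]
  have hc := P.copy_lt hj hij hq
  have hb := (P.block_mem hi hk hc).2
  have h2 : P.S (i+1) ≤ P.S P.t := P.S_mono (by omega)
  rw [P.S_t] at h2
  omega

lemma copy_force {i j j' q q' : ℕ} (hj : j < P.t) (hj' : j' < P.t)
    (hij : i ≤ j) (hij' : i ≤ j')
    (hq : q < P.mE j - P.mE (j+1)) (hq' : q' < P.mE j' - P.mE (j'+1))
    (h : P.mE i - P.mE j + q = P.mE i - P.mE j' + q') : j = j' ∧ q = q' := by
  rcases lt_trichotomy j j' with hlt | heq | hgt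
  · have h1 : P.mE j' ≤ P.mE (j+1) := P.mE_anti (by omega)
    have h2 : P.mE j ≤ P.mE i := P.mE_anti hij
    have h3 : P.mE (j+1) ≤ P.mE j := P.mE_anti (by omega)
    have h4 : P.mE j' ≤ P.mE i := P.mE_anti hij'
    have h5 : P.mE (j'+1) ≤ P.mE j' := P.mE_anti (by omega)
    omega
  · subst heq
    have h2 : P.mE j ≤ P.mE i := P.mE_anti hij
    exact ⟨rfl, by omega⟩
  · have h1 : P.mE j ≤ P.mE (j'+1) := P.mE_anti (by omega)
    have h2 : P.mE j' ≤ P.mE i := P.mE_anti hij'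
    have h3 : P.mE (j'+1) ≤ P.mE j' := P.mE_anti (by omega)
    have h4 : P.mE j ≤ P.mE i := P.mE_anti hij
    have h5 : P.mE (j+1) ≤ P.mE j := P.mE_anti (by omega)
    omega

lemma fwd_inj {r r' : ℕ} (hr : r < n) (hr' : r' < n) (h : P.fwd r = P.fwd r') :
    r = r' := by
  obtain ⟨j, i, q, k, hj, hij, hi, hq, hk, hrd⟩ := P.ds_decomp hr
  obtain ⟨j', i', q', k', hj', hij', hi', hq', hk', hrd'⟩ := P.ds_decomp hr'
  rw [P.fwd_eq hj hij hq hk hrd, P.fwd_eq hj' hij' hq' hk' hrd'] at h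
  have hc := P.copy_lt hj hij hq
  have hc' := P.copy_lt hj' hij' hq'
  have hb := P.block_mem hi hk hc
  have hb' := P.block_mem hi' hk' hc'
  have hii : i = i' := interval_eq P.S_mono hb.1 hb.2 (h ▸ hb'.1) (h ▸ hb'.2)
  subst hii
  have hkc : k = k' ∧ P.mE i - P.mE j + q = P.mE i - P.mE j' + q' :=
    mulmod_unique hc hc' (by omega)
  obtain ⟨hjj, hqq⟩ := P.copy_force hj hj' hij hij' hq hq' hkc.2
  subst hjj
  subst hqq
  omega

end StackPartition
end Aux2
noncomputable section Aux3
namespace StackPartition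

variable {n : ℕ} (P : StackPartition n)

lemma GEntry_eval (lam : Params P) {j i k i' k' : ℕ} (hj : j < P.t) (hij : i ≤ j)
    (hit : i < P.t) (hi't : i' < P.t) (hk : k < P.lE i) (hk' : k' < P.lE i') :
    GEntry P lam j (P.sE i + k) (P.sE i' + k')
      = (if i' = i then genCompE (P.l ⟨i, hit⟩) (lam ⟨i, hit⟩) k k' else 0)
      + (if 1 ≤ i ∧ k = 0 ∧ i' + 1 = i ∧ k' + 1 = P.lE i' then 1 else 0) := by
  have hr1 : P.sE i ≤ P.sE i + k ∧ P.sE i + k < P.sE (i+1) := by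
    have := P.sE_succ i; omega
  have hc1 : P.sE i' ≤ P.sE i' + k' ∧ P.sE i' + k' < P.sE (i'+1) := by
    have := P.sE_succ i'; omega
  rw [GEntry]
  congr 1
  -- first sum
  · by_cases hii : i' = i
    · subst hii
      rw [if_pos rfl]
      rw [Finset.sum_eq_single_of_mem ⟨i', hit⟩ (Finset.mem_univ _) ?_]
      · simp only [Fin.val_mk]
        rw [if_pos ⟨hij, hr1.1, hr1.2, hc1.1, hc1.2⟩]
        have e1 : P.sE i' + k - P.sE i' = k := by omega
        have e2 : P.sE i' + k' - P.sE i' = k' := by omega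
        rw [e1, e2]
      · intro b _ hb
        rw [if_neg]
        rintro ⟨_, hb2, hb3, _, _⟩
        exact hb (Fin.ext (interval_eq P.sE_mono hb2 hb3 hr1.1 hr1.2))
    · rw [if_neg hii, Finset.sum_eq_zero]
      intro b _
      rw [if_neg]
      rintro ⟨_, hb2, hb3, hb4, hb5⟩
      have h1 : (b : ℕ) = i := interval_eq P.sE_mono hb2 hb3 hr1.1 hr1.2
      have h2 : (b : ℕ) = i' := interval_eq P.sE_mono hb4 hb5 hc1.1 hc1.2
      omega
  -- second sum
  · have himp : ∀ b : Fin P.t,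
        (1 ≤ (b : ℕ) ∧ (b : ℕ) ≤ j ∧ P.sE i + k = P.sE (b : ℕ)
          ∧ P.sE i' + k' + 1 = P.sE (b : ℕ)) →
        (b : ℕ) = i ∧ (1 ≤ i ∧ k = 0 ∧ i' + 1 = i ∧ k' + 1 = P.lE i') := by
      rintro b ⟨h1, h2, h3, h4⟩
      have hbs : P.sE (b : ℕ) ≤ P.sE i + k ∧ P.sE i + k < P.sE ((b : ℕ) + 1) := by
        have hss := P.sE_succ (b : ℕ)
        have := P.lE_pos b.isLt
        omega
      have hbi : (b : ℕ) = i := interval_eq P.sE_mono hbs.1 hbs.2 hr1.1 hr1.2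
      rw [hbi] at h3 h4
      have hk0 : k = 0 := by omega
      have h1i : 1 ≤ i := by omega
      have hvlt : P.sE (i-1) ≤ P.sE i - 1 ∧ P.sE i - 1 < P.sE ((i-1)+1) := by
        have hlt : P.sE (i-1) < P.sE i := P.sE_lt_of_lt (by omega) (by omega)
        have : (i - 1) + 1 = i := by omega
        rw [this]
        omega
      have hvc : P.sE i' ≤ P.sE i - 1 ∧ P.sE i - 1 < P.sE (i'+1) := by omega
      have hi'eq : i' = i - 1 := interval_eq P.sE_mono hvc.1 hvc.2 hvlt.1 hvlt.2
      have hii2 : i' + 1 = i := by omega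
      rw [← hii2] at h4
      have hkq : k' + 1 = P.lE i' := by
        have hss := P.sE_succ i'
        omega
      exact ⟨hbi, h1i, hk0, by omega, hkq⟩
    by_cases hC : 1 ≤ i ∧ k = 0 ∧ i' + 1 = i ∧ k' + 1 = P.lE i'
    · rw [if_pos hC]
      obtain ⟨h1i, hk0, hii, hkl⟩ := hC
      rw [Finset.sum_eq_single_of_mem ⟨i, hit⟩ (Finset.mem_univ _) ?_]
      · simp only [Fin.val_mk]
        rw [if_pos]
        refine ⟨h1i, hij, by omega, ?_⟩
        rw [← hii]
        have hss := P.sE_succ i'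
        omega
      · intro b _ hb
        rw [if_neg]
        intro hcond
        exact hb (Fin.ext (himp b hcond).1)
    · rw [if_neg hC, Finset.sum_eq_zero]
      intro b _
      rw [if_neg]
      intro hcond
      exact hC (himp b hcond).2

end StackPartition
end Aux3
noncomputable section Aux4
namespace StackPartition

variable {n : ℕ} (P : StackPartition n)

lemma cpm_eval (lam : Params P) {j i q k j' i' q' k' : ℕ}
    (hj : j < P.t) (hij : i ≤ j) (hit : i < P.t)
    (hq : q < P.mE j - P.mE (j+1)) (hk : k < P.lE i)
    (hj' : j' < P.t) (hij' : i' ≤ j') (hi't : i' < P.t)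
    (hq' : q' < P.mE j' - P.mE (j'+1)) (hk' : k' < P.lE i') :
    cpmEntry P lam (P.S i + k * P.mE i + (P.mE i - P.mE j + q))
        (P.S i' + k' * P.mE i' + (P.mE i' - P.mE j' + q'))
      = if j' = j ∧ q' = q then
          ((if i' = i then genCompE (P.l ⟨i, hit⟩) (lam ⟨i, hit⟩) k k' else 0)
           + (if 1 ≤ i ∧ k = 0 ∧ i' + 1 = i ∧ k' + 1 = P.lE i' then 1 else 0))
        else 0 := by
  have hcr : P.mE i - P.mE j + q < P.mE i := P.copy_lt hj hij hq
  have hcc : P.mE i' - P.mE j' + q' < P.mE i' := P.copy_lt hj' hij' hq'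
  set cr := P.mE i - P.mE j + q with hcrdef
  set cc := P.mE i' - P.mE j' + q' with hccdef
  set vr := P.S i + k * P.mE i + cr with hvrdef
  set vc := P.S i' + k' * P.mE i' + cc with hvcdef
  have hbr : P.S i ≤ vr ∧ vr < P.S (i+1) := P.block_mem hit hk hcr
  have hbc : P.S i' ≤ vc ∧ vc < P.S (i'+1) := P.block_mem hi't hk' hcc
  have hsubr : vr - P.S i = k * P.mE i + cr := by omega
  have hsubc : vc - P.S i' = k' * P.mE i' + cc := by omega
  have hdivr : (vr - P.S i) / P.mE i = k := by rw [hsubr]; exact (divmod_eq hcr).1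
  have hmodr : (vr - P.S i) % P.mE i = cr := by rw [hsubr]; exact (divmod_eq hcr).2
  have hdivc : (vc - P.S i') / P.mE i' = k' := by rw [hsubc]; exact (divmod_eq hcc).1
  have hmodc : (vc - P.S i') % P.mE i' = cc := by rw [hsubc]; exact (divmod_eq hcc).2
  rw [cpmEntry]
  have hs1 : (∑ b : Fin P.t,
      if P.S (b:ℕ) ≤ vr ∧ vr < P.S ((b:ℕ)+1) ∧ P.S (b:ℕ) ≤ vc ∧ vc < P.S ((b:ℕ)+1)
          ∧ (vr - P.S (b:ℕ)) % P.m b = (vc - P.S (b:ℕ)) % P.m b then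
        genCompE (P.l b) (lam b) ((vr - P.S (b:ℕ)) / P.m b) ((vc - P.S (b:ℕ)) / P.m b)
      else 0)
      = if i' = i ∧ j' = j ∧ q' = q then
          genCompE (P.l ⟨i, hit⟩) (lam ⟨i, hit⟩) k k' else 0 := by
    have himp1 : ∀ b : Fin P.t,
        (P.S (b:ℕ) ≤ vr ∧ vr < P.S ((b:ℕ)+1) ∧ P.S (b:ℕ) ≤ vc ∧ vc < P.S ((b:ℕ)+1)
          ∧ (vr - P.S (b:ℕ)) % P.m b = (vc - P.S (b:ℕ)) % P.m b) →
        ((b:ℕ) = i ∧ (i' = i ∧ j' = j ∧ q' = q)) := by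
      rintro b ⟨h1, h2, h3, h4, h5⟩
      have hm : P.m b = P.mE (b:ℕ) := (P.mE_fin b).symm
      have hbi : (b:ℕ) = i := interval_eq P.S_mono h1 h2 hbr.1 hbr.2
      have hbi' : (b:ℕ) = i' := interval_eq P.S_mono h3 h4 hbc.1 hbc.2
      have hii : i' = i := by omega
      rw [hm, hbi] at h5
      rw [show P.S i = P.S i' by rw [hii]] at h5
      rw [show P.mE i = P.mE i' by rw [hii]] at h5
      rw [show vr - P.S i' = vr - P.S i by rw [hii]] at h5
      rw [show (vr - P.S i) % P.mE i' = (vr - P.S i) % P.mE i by rw [hii]] at h5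
      rw [hmodr, hmodc] at h5
      have hmE : P.mE i' = P.mE i := by rw [hii]
      have heq : P.mE i - P.mE j + q = P.mE i - P.mE j' + q' := by omega
      have hforce := P.copy_force hj hj' hij (hii ▸ hij') hq hq' heq
      exact ⟨hbi, hii, hforce.1.symm, hforce.2.symm⟩
    by_cases hcond : i' = i ∧ j' = j ∧ q' = q
    · obtain ⟨hB, hJ, hQ⟩ := hcond
      subst hB; subst hJ; subst hQ
      rw [if_pos ⟨rfl, rfl, rfl⟩]
      rw [Finset.sum_eq_single_of_mem ⟨i', hit⟩ (Finset.mem_univ _) ?_]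
      · simp only [Fin.val_mk]
        have hm : P.m ⟨i', hit⟩ = P.mE i' := by
          rw [← P.mE_fin ⟨i', hit⟩]
        rw [hm]
        rw [if_pos ⟨hbr.1, hbr.2, hbc.1, hbc.2, by rw [hmodr, hmodc]⟩]
        rw [hdivr, hdivc]
      · intro b _ hb
        rw [if_neg]
        intro hcond2
        exact hb (Fin.ext (himp1 b hcond2).1)
    · rw [if_neg hcond, Finset.sum_eq_zero]
      intro b _
      rw [if_neg]
      intro hcond2
      exact hcond (himp1 b hcond2).2
  have hs2 : (∑ b : Fin P.t,
      if P.S ((b:ℕ)+1) ≤ vr ∧ vr < P.S ((b:ℕ)+1) + P.mE ((b:ℕ)+1)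
          ∧ P.S ((b:ℕ)+1) - P.m b ≤ vc ∧ vc < P.S ((b:ℕ)+1)
          ∧ vc - (P.S ((b:ℕ)+1) - P.m b) = (P.m b - P.mE ((b:ℕ)+1)) + (vr - P.S ((b:ℕ)+1)) then
        (1 : ℂ)
      else 0)
      = if (1 ≤ i ∧ k = 0 ∧ i' + 1 = i ∧ k' + 1 = P.lE i') ∧ (j' = j ∧ q' = q) then
          1 else 0 := by
    have himp2 : ∀ b : Fin P.t,
        (P.S ((b:ℕ)+1) ≤ vr ∧ vr < P.S ((b:ℕ)+1) + P.mE ((b:ℕ)+1)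
          ∧ P.S ((b:ℕ)+1) - P.m b ≤ vc ∧ vc < P.S ((b:ℕ)+1)
          ∧ vc - (P.S ((b:ℕ)+1) - P.m b) = (P.m b - P.mE ((b:ℕ)+1)) + (vr - P.S ((b:ℕ)+1))) →
        ((b:ℕ) = i' ∧ ((1 ≤ i ∧ k = 0 ∧ i' + 1 = i ∧ k' + 1 = P.lE i') ∧ (j' = j ∧ q' = q))) := by
      rintro b ⟨h1, h2, h3, h4, h5⟩
      have hm : P.m b = P.mE (b:ℕ) := (P.mE_fin b).symm
      rw [hm] at h3 h5
      have hbt : (b:ℕ) + 1 < P.t := by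
        by_contra hcon
        push_neg at hcon
        have h0 : P.mE ((b:ℕ)+1) = 0 := P.mE_eq_zero (by omega)
        omega
      have hmle : P.mE ((b:ℕ)+1) ≤ P.lE ((b:ℕ)+1) * P.mE ((b:ℕ)+1) :=
        Nat.le_mul_of_pos_left _ (P.lE_pos hbt)
      have hS2 := P.S_succ ((b:ℕ)+1)
      have hbi1 : (b:ℕ) + 1 = i :=
        interval_eq P.S_mono h1 (by omega) hbr.1 hbr.2
      rw [hbi1] at h1 h2 h3 h4 h5
      have hk0 : k = 0 := by
        rcases Nat.eq_zero_or_pos k with h | h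
        · exact h
        · exfalso
          have := Nat.le_mul_of_pos_left (P.mE i) h
          omega
      have hSbsucc := P.S_succ (b:ℕ)
      rw [hbi1] at hSbsucc
      have hmbL : P.mE (b:ℕ) ≤ P.lE (b:ℕ) * P.mE (b:ℕ) :=
        Nat.le_mul_of_pos_left _ (P.lE_pos (by omega))
      have hbi' : (b:ℕ) = i' :=
        interval_eq P.S_mono (by omega) (by rw [hbi1]; exact h4) hbc.1 hbc.2
      rw [hbi'] at h3 h5 hSbsucc hmbL
      have hii : i' + 1 = i := by omega
      have hkl : k' + 1 = P.lE i' := by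
        by_contra hcon
        have hcon2 : k' + 2 ≤ P.lE i' := by omega
        have hmul : (k' + 2) * P.mE i' ≤ P.lE i' * P.mE i' :=
          Nat.mul_le_mul_right _ hcon2
        have hexp : (k' + 2) * P.mE i' = k' * P.mE i' + P.mE i' + P.mE i' := by ring
        omega
      have hKL : k' * P.mE i' + P.mE i' = P.lE i' * P.mE i' := by
        rw [← hkl]; ring
      have hkm0 : k * P.mE i = 0 := by rw [hk0]; ring
      have hmji : P.mE j ≤ P.mE i := P.mE_anti hij
      have hmii' : P.mE i ≤ P.mE i' := P.mE_anti (by omega)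
      have hmji' : P.mE j' ≤ P.mE i' := P.mE_anti hij'
      have hccE : cc = P.mE i' - P.mE j + q := by omega
      have hforce := P.copy_force (i := i') hj hj' (by omega) hij' hq hq' (by omega)
      exact ⟨hbi', ⟨by omega, hk0, hii, hkl⟩, hforce.1.symm, hforce.2.symm⟩
    by_cases hcond : (1 ≤ i ∧ k = 0 ∧ i' + 1 = i ∧ k' + 1 = P.lE i') ∧ (j' = j ∧ q' = q)
    · obtain ⟨⟨h1i, hk0, hii, hkl⟩, hJ, hQ⟩ := hcond
      obtain rfl : j = j' := hJ.symm
      obtain rfl : q = q' := hQ.symm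
      subst hk0; subst hii
      rw [if_pos ⟨⟨h1i, rfl, rfl, hkl⟩, rfl, rfl⟩]
      rw [Finset.sum_eq_single_of_mem ⟨i', hi't⟩ (Finset.mem_univ _) ?_]
      · simp only [Fin.val_mk]
        have hm : P.m ⟨i', hi't⟩ = P.mE i' := by rw [← P.mE_fin ⟨i', hi't⟩]
        rw [hm]
        have hS2 := P.S_succ i'
        have hKL : k' * P.mE i' + P.mE i' = P.lE i' * P.mE i' := by
          rw [← hkl]; ring
        have hkm0 : (0 : ℕ) * P.mE (i' + 1) = 0 := by ring
        have hmji : P.mE j ≤ P.mE (i'+1) := P.mE_anti hij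
        have hmii' : P.mE (i'+1) ≤ P.mE i' := P.mE_anti (by omega)
        rw [if_pos ⟨by omega, by omega, by omega, hbc.2, by omega⟩]
      · intro b _ hb
        rw [if_neg]
        intro hcond2
        exact hb (Fin.ext (himp2 b hcond2).1)
    · rw [if_neg hcond, Finset.sum_eq_zero]
      intro b _
      rw [if_neg]
      intro hcond2
      exact hcond (himp2 b hcond2).2
  rw [hs1, hs2]
  by_cases hA : j' = j ∧ q' = q
  · rw [if_pos hA]
    by_cases hB : i' = i
    · rw [if_pos ⟨hB, hA⟩, if_pos hB]
      by_cases hC : 1 ≤ i ∧ k = 0 ∧ i' + 1 = i ∧ k' + 1 = P.lE i'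
      · rw [if_pos ⟨hC, hA⟩, if_pos hC]
      · rw [if_neg (fun h => hC h.1), if_neg hC]
    · rw [if_neg (fun h => hB h.1), if_neg hB]
      by_cases hC : 1 ≤ i ∧ k = 0 ∧ i' + 1 = i ∧ k' + 1 = P.lE i'
      · rw [if_pos ⟨hC, hA⟩, if_pos hC]
      · rw [if_neg (fun h => hC h.1), if_neg hC]
  · rw [if_neg hA, if_neg (fun h : (i' = i ∧ j' = j ∧ q' = q) => hA h.2),
      if_neg (fun h : ((1 ≤ i ∧ k = 0 ∧ i' + 1 = i ∧ k' + 1 = P.lE i') ∧ (j' = j ∧ q' = q)) => hA h.2)]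
    rw [add_zero]

end StackPartition
end Aux4
noncomputable section Aux5
namespace StackPartition

variable {n : ℕ} (P : StackPartition n)

lemma ds_bounds {r j i q k : ℕ} (hj : j < P.t) (hij : i ≤ j)
    (hq : q < P.mE j - P.mE (j+1)) (hk : k < P.lE i)
    (hr : r = P.T j + q * P.sE (j+1) + (P.sE i + k)) :
    P.T j ≤ r ∧ r < P.T (j+1) ∧ (r - P.T j) / P.sE (j+1) = q
      ∧ (r - P.T j) % P.sE (j+1) = P.sE i + k := by
  have hplt : P.sE i + k < P.sE (i+1) := by
    have := P.sE_succ i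
    omega
  have hps : P.sE i + k < P.sE (j+1) := lt_of_lt_of_le hplt (P.sE_mono (by omega))
  have hTr2 : r < P.T (j+1) := by
    have hTs := P.T_succ j
    have h2 : (q + 1) * P.sE (j+1) ≤ (P.mE j - P.mE (j+1)) * P.sE (j+1) :=
      Nat.mul_le_mul_right _ (by omega)
    rw [add_one_mul] at h2
    omega
  have hrd : r - P.T j = q * P.sE (j+1) + (P.sE i + k) := by omega
  refine ⟨by omega, hTr2, ?_, ?_⟩
  · rw [hrd]; exact (divmod_eq hps).1
  · rw [hrd]; exact (divmod_eq hps).2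

lemma ds_eval (lam : Params P) {r c j i q k j' i' q' k' : ℕ}
    (hj : j < P.t) (hij : i ≤ j) (hit : i < P.t)
    (hq : q < P.mE j - P.mE (j+1)) (hk : k < P.lE i)
    (hr : r = P.T j + q * P.sE (j+1) + (P.sE i + k))
    (hj' : j' < P.t) (hij' : i' ≤ j') (hi't : i' < P.t)
    (hq' : q' < P.mE j' - P.mE (j'+1)) (hk' : k' < P.lE i')
    (hc : c = P.T j' + q' * P.sE (j'+1) + (P.sE i' + k')) :
    dsEntry P lam r c
      = if j' = j ∧ q' = q then
          ((if i' = i then genCompE (P.l ⟨i, hit⟩) (lam ⟨i, hit⟩) k k' else 0)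
           + (if 1 ≤ i ∧ k = 0 ∧ i' + 1 = i ∧ k' + 1 = P.lE i' then 1 else 0))
        else 0 := by
  obtain ⟨hTr1, hTr2, hdr, hmr⟩ := P.ds_bounds hj hij hq hk hr
  obtain ⟨hTc1, hTc2, hdc, hmc⟩ := P.ds_bounds hj' hij' hq' hk' hc
  rw [dsEntry]
  by_cases hA : j' = j ∧ q' = q
  · rw [if_pos hA]
    obtain ⟨hJ, hQ⟩ := hA
    rw [hJ] at hTc1 hTc2 hdc hmc
    rw [Finset.sum_eq_single_of_mem ⟨j, hj⟩ (Finset.mem_univ _) ?_]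
    · simp only [Fin.val_mk]
      rw [if_pos ⟨hTr1, hTr2, hTc1, hTc2, by rw [hdr, hdc, hQ]⟩]
      rw [hmr, hmc]
      exact P.GEntry_eval lam hj hij hit hi't hk hk'
    · intro b _ hb
      rw [if_neg]
      rintro ⟨hb1, hb2, _, _, _⟩
      exact hb (Fin.ext (interval_eq P.T_mono hb1 hb2 hTr1 hTr2))
  · rw [if_neg hA, Finset.sum_eq_zero]
    intro b _
    rw [if_neg]
    rintro ⟨hb1, hb2, hb3, hb4, hb5⟩
    have h1 : (b:ℕ) = j := interval_eq P.T_mono hb1 hb2 hTr1 hTr2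
    have h2 : (b:ℕ) = j' := interval_eq P.T_mono hb3 hb4 hTc1 hTc2
    have hjj : j' = j := by omega
    rw [h1] at hb5
    rw [hjj] at hdc
    rw [hdr, hdc] at hb5
    exact hA ⟨hjj, hb5.symm⟩

lemma entry_eq (lam : Params P) {r c : ℕ} (hr : r < n) (hc : c < n) :
    cpmEntry P lam (P.fwd r) (P.fwd c) = dsEntry P lam r c := by
  obtain ⟨j, i, q, k, hj, hij, hit, hq, hk, hrd⟩ := P.ds_decomp hr
  obtain ⟨j', i', q', k', hj', hij', hi't, hq', hk', hcd⟩ := P.ds_decomp hc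
  rw [P.fwd_eq hj hij hq hk hrd, P.fwd_eq hj' hij' hq' hk' hcd]
  rw [P.cpm_eval lam hj hij hit hq hk hj' hij' hi't hq' hk']
  rw [P.ds_eval lam hj hij hit hq hk hrd hj' hij' hi't hq' hk' hcd]

end StackPartition
end Aux5


/-- A canonical plane matrix `A ∈ 𝒫_π` is similar, via a
permutation matrix, to the block diagonal matrix `⊕_{j=1}^{t} (m_j − m_{j+1}) G_j`
containing exactly `m_j − m_{j+1}` copies of `G_j` for each `j`. -/
theorem statement5 (n : ℕ) (hn : 2 ≤ n) (P : StackPartition n) (lam : Params P) :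
    ∃ σ : Equiv.Perm (Fin n),
      (cpm P lam).submatrix σ σ = Matrix.of fun r c : Fin n => dsEntry P lam r c := by
  classical
  let F : Fin n → Fin n := fun r => ⟨P.fwd r, P.fwd_lt r.isLt⟩
  have hinj : Function.Injective F := by
    intro a b h
    exact Fin.ext (P.fwd_inj a.isLt b.isLt (congrArg Fin.val h))
  have hbij : Function.Bijective F := Finite.injective_iff_bijective.mp hinj
  refine ⟨Equiv.ofBijective F hbij, ?_⟩
  ext r c
  exact P.entry_eq lam r.isLt c.isLt
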